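/- arXiv:2012.14342 — 3 statements merged into one kernel-verified Lean document; each statement's English description precedes it below -/
import Mathlib

section
/- For every integer d ≥ 1 and every even integer p ≥ 2, the coefficient D(d,p) := (d−1)! · d^{p/2} · (d+1)^{p/2} / (p+d−1)! satisfies 1 − p(p−2)/(2d) ≤ D(d,p) ≤ 1. -/
/-!
Writing `p = 2m`, the identity `(p + d - 1)! = (d - 1)! · d (d + 1) ⋯ (d + p - 1)` and pairing
consecutive factors turn the coefficient into `∏_{i < m} d (d + 1) / ((d + 2i) (d + 2i + 1))`.
Every factor lies in `[0, 1]`, which gives the upper bound, and is at least `1 - 4i/d`; the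
Weierstrass product inequality `∏ fᵢ ≥ 1 - ∑ (1 - fᵢ)` then gives the lower bound, since
`∑_{i < m} 4i/d = p (p - 2) / (2d)`.
-/

open Finset Nat

theorem one_sub_sum_one_sub_le_prod {ι R : Type*} [CommRing R] [LinearOrder R]
    [IsStrictOrderedRing R] (s : Finset ι) {f : ι → R} (h0 : ∀ i ∈ s, 0 ≤ f i)
    (h1 : ∀ i ∈ s, f i ≤ 1) :
    1 - ∑ i ∈ s, (1 - f i) ≤ ∏ i ∈ s, f i := by
  induction s using Finset.cons_induction with
  | empty => simp
  | cons a s _ ih =>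
    simp only [mem_cons, forall_eq_or_imp] at h0 h1
    rw [sum_cons, prod_cons]
    have hrest := ih h0.2 h1.2
    have hsum : 0 ≤ ∑ i ∈ s, (1 - f i) := sum_nonneg fun i hi ↦ sub_nonneg.2 (h1.2 i hi)
    nlinarith [h0.1, h1.1]

theorem Finset.prod_range_two_mul {M : Type*} [CommMonoid M] (f : ℕ → M) (m : ℕ) :
    ∏ i ∈ range (2 * m), f i = ∏ i ∈ range m, (f (2 * i) * f (2 * i + 1)) := by
  induction m with
  | zero => simp
  | succ n ih => rw [Nat.mul_succ, prod_range_succ, prod_range_succ, ih, prod_range_succ, mul_assoc]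

theorem factorial_pred_mul_pow_div_factorial_eq_prod (d m : ℕ) (hd : 1 ≤ d) :
    ((d - 1)! : ℝ) * (d : ℝ) ^ m * ((d : ℝ) + 1) ^ m / ((2 * m + d - 1)! : ℝ) =
      ∏ i ∈ range m, (d : ℝ) * (d + 1) / ((d + 2 * i) * (d + 2 * i + 1)) := by
  have hfact : ((2 * m + d - 1)! : ℝ) = (d - 1)! * ∏ i ∈ range (2 * m), ((d : ℝ) + i) := by
    rw [add_comm, ← factorial_mul_ascFactorial' d (2 * m) hd, ascFactorial_eq_prod_range]
    push_cast
    rfl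
  have hpos : (0 : ℝ) < ∏ i ∈ range m, (((d : ℝ) + 2 * i) * (d + 2 * i + 1)) :=
    prod_pos fun i _ ↦ by positivity
  rw [hfact, prod_range_two_mul, prod_div_distrib, prod_const, card_range, mul_pow]
  push_cast
  have hfac := (d - 1).factorial_pos
  field_simp
  simp only [add_assoc]

section PairRatio

variable {d t : ℝ}

theorem pair_ratio_nonneg (hd : 0 ≤ d) (ht : 0 ≤ t) :
    0 ≤ d * (d + 1) / ((d + 2 * t) * (d + 2 * t + 1)) := by positivity

theorem pair_ratio_le_one (hd : 0 ≤ d) (ht : 0 ≤ t) :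
    d * (d + 1) / ((d + 2 * t) * (d + 2 * t + 1)) ≤ 1 :=
  div_le_one_of_le₀ (by nlinarith) (by positivity)

theorem one_sub_four_mul_div_le_pair_ratio (hd : 0 < d) (ht : 0 ≤ t) :
    1 - 4 * t / d ≤ d * (d + 1) / ((d + 2 * t) * (d + 2 * t + 1)) := by
  rw [le_div_iff₀ (by positivity), one_sub_div hd.ne', div_mul_eq_mul_div, div_le_iff₀ hd]
  nlinarith [mul_nonneg ht ht, mul_nonneg (mul_nonneg ht ht) ht, mul_nonneg ht hd.le]

end PairRatio

theorem sum_range_four_mul_div (d : ℝ) (m : ℕ) :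
    ∑ i ∈ range m, 4 * (i : ℝ) / d = (2 * m) * (2 * m - 2) / (2 * d) := by
  induction m with
  | zero => simp
  | succ n ih =>
    rw [sum_range_succ, ih]
    push_cast
    ring

theorem D_coeff_bounds_even_general (d p : ℕ) (hd : 1 ≤ d) (hpe : Even p) :
    1 - (p : ℝ) * ((p : ℝ) - 2) / (2 * d)
        ≤ ((d - 1).factorial : ℝ) * (d : ℝ) ^ (p / 2) * ((d : ℝ) + 1) ^ (p / 2)
            / ((p + d - 1).factorial : ℝ) ∧
      ((d - 1).factorial : ℝ) * (d : ℝ) ^ (p / 2) * ((d : ℝ) + 1) ^ (p / 2)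
          / ((p + d - 1).factorial : ℝ) ≤ 1 := by
  obtain ⟨m, rfl⟩ := hpe
  rw [← two_mul, Nat.mul_div_cancel_left m two_pos,
    factorial_pred_mul_pow_div_factorial_eq_prod d m hd]
  have hd' : (0 : ℝ) < d := by exact_mod_cast hd
  have hi (i : ℕ) : (0 : ℝ) ≤ i := i.cast_nonneg
  refine ⟨?_, prod_le_one (fun i _ ↦ pair_ratio_nonneg hd'.le (hi i))
    (fun i _ ↦ pair_ratio_le_one hd'.le (hi i))⟩
  calc 1 - ((2 * m : ℕ) : ℝ) * ((2 * m : ℕ) - 2) / (2 * d)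
      = 1 - ∑ i ∈ range m, 4 * (i : ℝ) / d := by rw [sum_range_four_mul_div]; push_cast; rfl
    _ ≤ 1 - ∑ i ∈ range m, (1 - (d : ℝ) * (d + 1) / ((d + 2 * i) * (d + 2 * i + 1))) := by
        gcongr with i
        linarith [one_sub_four_mul_div_le_pair_ratio hd' (hi i)]
    _ ≤ _ := one_sub_sum_one_sub_le_prod _ (fun i _ ↦ pair_ratio_nonneg hd'.le (hi i))
        (fun i _ ↦ pair_ratio_le_one hd'.le (hi i))

/-- For every integer `d ≥ 1` and every even integer `p ≥ 2`, the
coefficient `D(d,p) := (d−1)!·d^{p/2}·(d+1)^{p/2}/(p+d−1)!` satisfies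
`1 − p(p−2)/(2d) ≤ D(d,p) ≤ 1`. -/
theorem D_coeff_bounds_even (d p : ℕ) (hd : 1 ≤ d) (hp : 2 ≤ p) (hpe : Even p) :
    1 - (p : ℝ) * ((p : ℝ) - 2) / (2 * d)
        ≤ ((d - 1).factorial : ℝ) * (d : ℝ) ^ (p / 2) * ((d : ℝ) + 1) ^ (p / 2)
            / ((p + d - 1).factorial : ℝ) ∧
      ((d - 1).factorial : ℝ) * (d : ℝ) ^ (p / 2) * ((d : ℝ) + 1) ^ (p / 2)
          / ((p + d - 1).factorial : ℝ) ≤ 1 :=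
  D_coeff_bounds_even_general d p hd hpe
end

section
/- For every integer d ≥ 1 and every odd integer p ≥ 3, the coefficient D(d,p) := (d−1)! · (d(d+1))^{p/2} / (p+d−1)! satisfies 1 − (p+1)(p−1)/(2d) ≤ D(d,p) ≤ 1. -/
open Finset

private lemma ascFact_prod (n k : ℕ) : n.ascFactorial k = ∏ i ∈ range k, (n + i) := by
  induction k with
  | zero => simp [Nat.ascFactorial]
  | succ k ih => rw [Nat.ascFactorial_succ, prod_range_succ, ← ih, mul_comm]

set_option maxHeartbeats 1000000 in
/-- **Statement 9.** For every integer `d ≥ 1` and every odd integer `p ≥ 3`, the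
coefficient `D(d,p) := (d−1)!·(d(d+1))^{p/2}/(p+d−1)!` (real power) satisfies
`1 − (p+1)(p−1)/(2d) ≤ D(d,p) ≤ 1`. -/
theorem D_coeff_bounds_odd (d p : ℕ) (hd : 1 ≤ d) (hp : 3 ≤ p) (hpo : Odd p) :
    1 - ((p : ℝ) + 1) * ((p : ℝ) - 1) / (2 * d)
        ≤ ((d - 1).factorial : ℝ) * ((d : ℝ) * ((d : ℝ) + 1)) ^ ((p : ℝ) / 2)
            / ((p + d - 1).factorial : ℝ) ∧
      ((d - 1).factorial : ℝ) * ((d : ℝ) * ((d : ℝ) + 1)) ^ ((p : ℝ) / 2)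
          / ((p + d - 1).factorial : ℝ) ≤ 1 := by
  obtain ⟨k, hk⟩ := hpo
  have hk1 : 1 ≤ k := by omega
  have hfact : ((p + d - 1).factorial : ℝ)
      = ((d - 1).factorial : ℝ) * ∏ i ∈ range p, ((d : ℝ) + i) := by
    have h := Nat.factorial_mul_ascFactorial' d p hd
    rw [ascFact_prod] at h
    have heq : p + d - 1 = d + p - 1 := by omega
    rw [heq, ← h]
    push_cast
    ring
  set P : ℝ := ∏ i ∈ range p, ((d : ℝ) + i) with hP
  have hd1 : (1 : ℝ) ≤ d := by exact_mod_cast hd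
  have hp3 : (3 : ℝ) ≤ p := by exact_mod_cast hp
  have hPpos : 0 < P := prod_pos fun i _ => by positivity
  have hA : (0 : ℝ) ≤ (d : ℝ) * ((d : ℝ) + 1) := by positivity
  set A : ℝ := (d : ℝ) * ((d : ℝ) + 1) with hAdef
  have hfne : ((d - 1).factorial : ℝ) ≠ 0 := by positivity
  have hDeq : ((d - 1).factorial : ℝ) * A ^ ((p : ℝ) / 2) / ((p + d - 1).factorial : ℝ)
      = A ^ ((p : ℝ) / 2) / P := by
    rw [hfact]; field_simp
  have hre : P = ∏ i ∈ range p, ((d : ℝ) + ((p : ℝ) - 1 - i)) := by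
    rw [hP, ← prod_range_reflect (fun i => (d : ℝ) + i) p]
    apply prod_congr rfl
    intro i hi
    rw [mem_range] at hi
    congr 1
    rw [Nat.cast_sub (by omega : i ≤ p - 1), Nat.cast_sub (by omega : 1 ≤ p), Nat.cast_one]
  have hPsq : P ^ 2 = ∏ i ∈ range p, (((d : ℝ) + i) * ((d : ℝ) + ((p : ℝ) - 1 - i))) := by
    rw [sq]
    nth_rewrite 2 [hre]
    rw [← prod_mul_distrib]
  have hrpow_sq : (A ^ ((p : ℝ) / 2)) ^ 2 = A ^ p := by
    rw [← Real.rpow_natCast (A ^ ((p : ℝ) / 2)) 2, ← Real.rpow_mul hA,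
      show ((p : ℝ) / 2 * ((2 : ℕ) : ℝ)) = ((p : ℕ) : ℝ) by push_cast; ring,
      Real.rpow_natCast]
  have hApos : 0 ≤ A ^ ((p : ℝ) / 2) := Real.rpow_nonneg hA _
  constructor
  · -- lower bound
    set m : ℝ := (d : ℝ) + k with hm
    have hmpos : (0 : ℝ) < m := by positivity
    have hk1' : (1 : ℝ) ≤ k := by exact_mod_cast hk1
    have hpk : (p : ℝ) = 2 * k + 1 := by exact_mod_cast hk
    have hPle : P ≤ m ^ p := by
      have hsq : P ^ 2 ≤ (m ^ p) ^ 2 := by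
        rw [hPsq, ← pow_mul, mul_comm p 2, pow_mul, sq]
        calc ∏ i ∈ range p, (((d : ℝ) + i) * ((d : ℝ) + ((p : ℝ) - 1 - i)))
            ≤ ∏ _i ∈ range p, (m * m) := ?_
          _ = (m * m) ^ p := by rw [prod_const, card_range]
        apply prod_le_prod
        · intro i hi
          rw [mem_range] at hi
          have h1 : (i : ℝ) ≤ (p : ℝ) - 1 := by
            have : (i : ℝ) + 1 ≤ p := by exact_mod_cast hi
            linarith
          have hi0 : (0 : ℝ) ≤ i := Nat.cast_nonneg i
          have : (0 : ℝ) ≤ (d : ℝ) + ((p : ℝ) - 1 - i) := by linarith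
          exact mul_nonneg (by linarith) this
        · intro i hi
          rw [mem_range] at hi
          have h1 : (i : ℝ) ≤ (p : ℝ) - 1 := by
            have : (i : ℝ) + 1 ≤ p := by exact_mod_cast hi
            linarith
          have hi0 : (0 : ℝ) ≤ i := Nat.cast_nonneg i
          have hsum : ((d : ℝ) + i) + ((d : ℝ) + ((p : ℝ) - 1 - i)) = 2 * m := by
            rw [hm, hpk]; ring
          nlinarith [sq_nonneg (((d : ℝ) + i) - ((d : ℝ) + ((p : ℝ) - 1 - i)))]
      exact (pow_le_pow_iff_left₀ hPpos.le (by positivity) two_ne_zero).mp hsq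
    have hstep1 : A ^ ((p : ℝ) / 2) / m ^ p ≤ A ^ ((p : ℝ) / 2) / P :=
      div_le_div_of_nonneg_left hApos hPpos hPle
    have hstep2 : A ^ ((p : ℝ) / 2) / m ^ p = (A / m ^ 2) ^ ((p : ℝ) / 2) := by
      rw [Real.div_rpow hA (by positivity)]
      congr 1
      rw [← Real.rpow_natCast m p, ← Real.rpow_natCast m 2, ← Real.rpow_mul hmpos.le]
      congr 1
      push_cast
      ring
    have hAm : A / m ^ 2 ≤ 1 := by
      rw [div_le_one (by positivity), hAdef, hm]
      nlinarith
    have hbern : 1 + ((p : ℝ) / 2) * (A / m ^ 2 - 1) ≤ (A / m ^ 2) ^ ((p : ℝ) / 2) := by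
      have hAmnn : (0 : ℝ) ≤ A / m ^ 2 := by positivity
      have := one_add_mul_self_le_rpow_one_add (s := A / m ^ 2 - 1)
        (by linarith) (p := (p : ℝ) / 2) (by linarith)
      simpa using this
    have key : (p : ℝ) / 2 * (1 - A / m ^ 2) ≤ ((p : ℝ) + 1) * ((p : ℝ) - 1) / (2 * d) := by
      have h1 : (p : ℝ) / 2 * (1 - A / m ^ 2) = (p : ℝ) * (m ^ 2 - A) / (2 * m ^ 2) := by
        field_simp
        try ring
      rw [h1, div_le_div_iff₀ (by positivity) (by positivity)]
      rw [hAdef, hm, hpk]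
      have g1 : (0:ℝ) ≤ (k:ℝ) * (d:ℝ)^2 := by positivity
      have g2 : (0:ℝ) ≤ (k:ℝ)^3 * (d:ℝ) := by positivity
      have g3 : (0:ℝ) ≤ (k:ℝ)^2 * (d:ℝ) := by positivity
      have g4 : (0:ℝ) ≤ (k:ℝ)^4 := by positivity
      have g5 : (0:ℝ) ≤ (k:ℝ)^3 := by positivity
      have g6 : (0:ℝ) ≤ (d:ℝ)^2 := by positivity
      nlinarith [g1, g2, g3, g4, g5, g6]
    have hfinal : 1 - ((p : ℝ) + 1) * ((p : ℝ) - 1) / (2 * d)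
        ≤ 1 + ((p : ℝ) / 2) * (A / m ^ 2 - 1) := by
      have hneg : ((p : ℝ) / 2) * (A / m ^ 2 - 1) = -(((p : ℝ) / 2) * (1 - A / m ^ 2)) := by
        ring
      rw [hneg]
      linarith
    rw [hDeq]
    calc 1 - ((p : ℝ) + 1) * ((p : ℝ) - 1) / (2 * d)
        ≤ 1 + ((p : ℝ) / 2) * (A / m ^ 2 - 1) := hfinal
      _ ≤ (A / m ^ 2) ^ ((p : ℝ) / 2) := hbern
      _ = A ^ ((p : ℝ) / 2) / m ^ p := hstep2.symm
      _ ≤ A ^ ((p : ℝ) / 2) / P := hstep1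
  · -- upper bound
    have hle : A ^ p ≤ P ^ 2 := by
      rw [hPsq]
      calc A ^ p = ∏ _i ∈ range p, A := by rw [prod_const, card_range]
        _ ≤ _ := ?_
      apply prod_le_prod
      · intro i _; exact hA
      · intro i hi
        rw [mem_range] at hi
        have h1 : (i : ℝ) ≤ (p : ℝ) - 1 := by
          have : (i : ℝ) + 1 ≤ p := by exact_mod_cast hi
          linarith
        have hi0 : (0 : ℝ) ≤ i := Nat.cast_nonneg i
        nlinarith
    have hmain : A ^ ((p : ℝ) / 2) ≤ P := by
      have h2 : (A ^ ((p : ℝ) / 2)) ^ 2 ≤ P ^ 2 := by rw [hrpow_sq]; exact hle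
      exact (pow_le_pow_iff_left₀ hApos hPpos.le two_ne_zero).mp h2
    rw [hDeq, div_le_one hPpos]
    exact hmain
end

section
/- For all integers p, d ≥ 1 with p² ≤ d, the rising factorial satisfies (d+p−1)! / (d^p · (d−1)!) ≤ 1 + p²/d; equivalently, ∏_{i=0}^{p−1} (1 + i/d) ≤ 1 + p²/d. -/
lemma asc_prod (d p : ℕ) : (d.ascFactorial p : ℝ) = ∏ i ∈ Finset.range p, ((d : ℝ) + i) := by
  induction p with
  | zero => simp
  | succ k ih =>
      rw [Nat.ascFactorial_succ, Finset.prod_range_succ, ← ih]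
      push_cast; ring

/-- **Statement 15.** For all integers `p, d ≥ 1` with `p² ≤ d`, the normalized rising
factorial satisfies `(d+p−1)!/(d^p·(d−1)!) ≤ 1 + p²/d`; equivalently,
`∏_{i=0}^{p−1} (1 + i/d) ≤ 1 + p²/d`. -/
theorem rising_factorial_bound (p d : ℕ) (hp : 1 ≤ p) (hd : 1 ≤ d) (hpd : p ^ 2 ≤ d) :
    ((d + p - 1).factorial : ℝ) / ((d : ℝ) ^ p * ((d - 1).factorial : ℝ))
        ≤ 1 + (p : ℝ) ^ 2 / d ∧
      (∏ i ∈ Finset.range p, (1 + (i : ℝ) / d)) ≤ 1 + (p : ℝ) ^ 2 / d := by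
  have hd0 : (0:ℝ) < d := by exact_mod_cast hd
  have hp1 : (1:ℝ) ≤ p := by exact_mod_cast hp
  set s : ℝ := (p * (p - 1) / 2) / d with hs
  have hsum : ∑ i ∈ Finset.range p, (i : ℝ) / d = s := by
    rw [← Finset.sum_div, hs]
    congr 1
    have h2 := congrArg (Nat.cast (R := ℝ)) (Finset.sum_range_id_mul_two p)
    push_cast [Nat.cast_sub hp] at h2
    linarith
  have hsle : s ≤ 1/2 := by
    rw [hs, div_le_iff₀ hd0]
    have hpd' : ((p:ℝ))^2 ≤ d := by exact_mod_cast hpd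
    nlinarith
  have hs0 : 0 ≤ s := by
    apply div_nonneg _ hd0.le
    apply div_nonneg _ (by norm_num)
    nlinarith
  have hprod : (∏ i ∈ Finset.range p, (1 + (i : ℝ) / d)) ≤ 1 + (p : ℝ) ^ 2 / d := by
    calc (∏ i ∈ Finset.range p, (1 + (i : ℝ) / d))
        ≤ ∏ i ∈ Finset.range p, Real.exp ((i : ℝ) / d) := by
          apply Finset.prod_le_prod
          · intro i _; positivity
          · intro i _; rw [add_comm]; exact Real.add_one_le_exp _
      _ = Real.exp s := by rw [← Real.exp_sum, hsum]
      _ ≤ 1 / (1 - s) := by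
          have h1 : 1 - s ≤ Real.exp (-s) := by
            have := Real.add_one_le_exp (-s); linarith
          have h2 : (0:ℝ) < 1 - s := by linarith
          rw [le_div_iff₀ h2]
          have h3 : Real.exp s * (1 - s) ≤ Real.exp s * Real.exp (-s) :=
            mul_le_mul_of_nonneg_left h1 (Real.exp_pos s).le
          have h4 : Real.exp s * Real.exp (-s) = 1 := by
            rw [← Real.exp_add]; simp
          linarith
      _ ≤ 1 + 2 * s := by
          rw [div_le_iff₀ (by linarith)]
          nlinarith
      _ ≤ 1 + (p : ℝ) ^ 2 / d := by
          have h5 : 2 * s = (p:ℝ) * ((p:ℝ)-1) / d := by rw [hs]; ring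
          rw [h5]
          gcongr
          nlinarith
  refine ⟨?_, hprod⟩
  have key : ((d + p - 1).factorial : ℝ)
      = ((d-1).factorial : ℝ) * ∏ i ∈ Finset.range p, ((d:ℝ) + i) := by
    rw [← asc_prod]
    exact_mod_cast (Nat.factorial_mul_ascFactorial' d p hd).symm
  have hprodeq : (∏ i ∈ Finset.range p, (1 + (i : ℝ) / d)) =
      (∏ i ∈ Finset.range p, ((d:ℝ) + i)) / (d:ℝ)^p := by
    rw [show ((d:ℝ)^p) = ∏ _i ∈ Finset.range p, (d:ℝ) by simp, ← Finset.prod_div_distrib]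
    apply Finset.prod_congr rfl
    intro i _
    field_simp
  have hf0 : (0:ℝ) < ((d-1).factorial : ℝ) := by exact_mod_cast (d-1).factorial_pos
  have heq : ((d + p - 1).factorial : ℝ) / ((d : ℝ) ^ p * ((d - 1).factorial : ℝ))
      = (∏ i ∈ Finset.range p, ((d:ℝ) + i)) / (d:ℝ)^p := by
    rw [key]
    field_simp
  rw [heq, ← hprodeq]
  exact hprod
end
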